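/- arXiv:2103.15894 — 3 statements merged into one kernel-verified Lean document; each statement's English description precedes it below -/
import Mathlib

section
/- For two row-stochastic matrices P and P', the ergodicity coefficient of their product satisfies the submultiplicative-type bound Λ₁(P P') ≤ Λ₁(P) · Λ₁(P'). -/
/-- The ergodicity coefficient `Λ₁(P) = (1/2) max_{i,j} Σ_k |P_{ik} − P_{jk}|`. -/
noncomputable def ergCoeff {n : Type*} [Fintype n] [Nonempty n] (P : Matrix n n ℝ) : ℝ :=
  (1 / 2) * (Finset.univ ×ˢ Finset.univ).sup'
    (Finset.univ_nonempty.product Finset.univ_nonempty)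
    (fun p => ∑ k, |P p.1 k - P p.2 k|)

private lemma key_sum {n : Type*} [Fintype n] (P' : Matrix n n ℝ)
    (d : n → ℝ) (hd : ∑ k, d k = 0) (M : ℝ) (hM0 : 0 ≤ M)
    (hM : ∀ k k', ∑ l, |P' k l - P' k' l| ≤ M) :
    ∑ l, |∑ k, d k * P' k l| ≤ ((1/2) * ∑ k, |d k|) * M := by
  classical
  set a : n → ℝ := fun k => max (d k) 0 with ha
  set b : n → ℝ := fun k => max (-d k) 0 with hb
  have ha0 : ∀ k, 0 ≤ a k := fun k => le_max_right _ _
  have hb0 : ∀ k, 0 ≤ b k := fun k => le_max_right _ _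
  have hab : ∀ k, a k - b k = d k := by
    intro k; rcases le_or_gt (d k) 0 with h | h
    · simp [ha, hb, max_eq_right h, max_eq_left (by linarith : (0:ℝ) ≤ -d k)]
    · simp [ha, hb, max_eq_left h.le, max_eq_right (by linarith : -d k ≤ 0)]
  have habs : ∀ k, a k + b k = |d k| := by
    intro k; rcases le_or_gt (d k) 0 with h | h
    · simp [ha, hb, max_eq_right h, max_eq_left (by linarith : (0:ℝ) ≤ -d k), abs_of_nonpos h]
    · simp [ha, hb, max_eq_left h.le, max_eq_right (by linarith : -d k ≤ 0), abs_of_pos h]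
  set S : ℝ := (1/2) * ∑ k, |d k| with hS
  have h1 : ∑ k, a k - ∑ k, b k = 0 := by
    rw [← Finset.sum_sub_distrib]; simpa [hab] using hd
  have h2 : ∑ k, a k + ∑ k, b k = ∑ k, |d k| := by
    rw [← Finset.sum_add_distrib]; exact Finset.sum_congr rfl fun k _ => habs k
  have hA : ∑ k, a k = S := by rw [hS]; linarith
  have hB : ∑ k, b k = S := by rw [hS]; linarith
  have hS0 : 0 ≤ S := by
    rw [hS]
    have : (0:ℝ) ≤ ∑ k, |d k| := Finset.sum_nonneg fun k _ => abs_nonneg _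
    linarith
  rcases eq_or_lt_of_le hS0 with h0 | hpos
  · -- S = 0, so d = 0
    have hsum0 : ∑ k, |d k| = 0 := by rw [hS] at h0; linarith
    have : ∀ k, d k = 0 := by
      intro k
      have h0k := (Finset.sum_eq_zero_iff_of_nonneg
        (fun k (_ : k ∈ Finset.univ) => abs_nonneg (d k))).mp hsum0 k (Finset.mem_univ k)
      exact abs_eq_zero.mp h0k
    simp [this, ← hS, ← h0]
  · -- key identity
    have key : ∀ l, S * (∑ k, d k * P' k l)
        = ∑ k, ∑ k', a k * b k' * (P' k l - P' k' l) := by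
      intro l
      have expand : ∑ k, ∑ k', a k * b k' * (P' k l - P' k' l)
          = (∑ k, a k * P' k l) * (∑ k', b k')
            - (∑ k, a k) * (∑ k', b k' * P' k' l) := by
        rw [Finset.sum_mul_sum, Finset.sum_mul_sum, ← Finset.sum_sub_distrib]
        refine Finset.sum_congr rfl fun k _ => ?_
        rw [← Finset.sum_sub_distrib]
        exact Finset.sum_congr rfl fun k' _ => by ring
      rw [expand, hA, hB, Finset.mul_sum]
      rw [show (∑ k, a k * P' k l) * S - S * ∑ k', b k' * P' k' l
          = S * ((∑ k, a k * P' k l) - (∑ k, b k * P' k l)) by ring,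
        ← Finset.sum_sub_distrib, Finset.mul_sum]
      refine Finset.sum_congr rfl fun k _ => ?_
      rw [show a k * P' k l - b k * P' k l = (a k - b k) * P' k l by ring, hab k]
    have hl : ∀ l, S * |∑ k, d k * P' k l|
        ≤ ∑ k, ∑ k', a k * b k' * |P' k l - P' k' l| := by
      intro l
      calc S * |∑ k, d k * P' k l| = |S * ∑ k, d k * P' k l| := by
            rw [abs_mul, abs_of_nonneg hS0]
        _ = |∑ k, ∑ k', a k * b k' * (P' k l - P' k' l)| := by rw [key l]
        _ ≤ ∑ k, |∑ k', a k * b k' * (P' k l - P' k' l)| :=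
            Finset.abs_sum_le_sum_abs _ _
        _ ≤ ∑ k, ∑ k', |a k * b k' * (P' k l - P' k' l)| :=
            Finset.sum_le_sum fun k _ => Finset.abs_sum_le_sum_abs _ _
        _ = ∑ k, ∑ k', a k * b k' * |P' k l - P' k' l| := by
            refine Finset.sum_congr rfl fun k _ => Finset.sum_congr rfl fun k' _ => ?_
            rw [abs_mul, abs_mul, abs_of_nonneg (ha0 k), abs_of_nonneg (hb0 k')]
    have total : S * (∑ l, |∑ k, d k * P' k l|) ≤ S * (S * M) := by
      calc S * (∑ l, |∑ k, d k * P' k l|)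
          = ∑ l, S * |∑ k, d k * P' k l| := Finset.mul_sum _ _ _
        _ ≤ ∑ l, ∑ k, ∑ k', a k * b k' * |P' k l - P' k' l| :=
            Finset.sum_le_sum fun l _ => hl l
        _ = ∑ k, ∑ k', a k * b k' * ∑ l, |P' k l - P' k' l| := by
            rw [Finset.sum_comm]
            refine Finset.sum_congr rfl fun k _ => ?_
            rw [Finset.sum_comm]
            refine Finset.sum_congr rfl fun k' _ => ?_
            rw [Finset.mul_sum]
        _ ≤ ∑ k, ∑ k', a k * b k' * M := by
            refine Finset.sum_le_sum fun k _ => Finset.sum_le_sum fun k' _ => ?_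
            exact mul_le_mul_of_nonneg_left (hM k k') (mul_nonneg (ha0 k) (hb0 k'))
        _ = (∑ k, a k) * (∑ k', b k') * M := by
            rw [Finset.sum_mul_sum, Finset.sum_mul]
            refine Finset.sum_congr rfl fun k _ => ?_
            rw [Finset.sum_mul]
        _ = S * (S * M) := by rw [hA, hB]; ring
    have := le_of_mul_le_mul_left total hpos
    simpa [hS] using this

private lemma ergCoeff_le_of_forall {n : Type*} [Fintype n] [Nonempty n]
    (Q : Matrix n n ℝ) (C : ℝ) (h : ∀ i j, ∑ k, |Q i k - Q j k| ≤ C) :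
    ergCoeff Q ≤ (1/2) * C := by
  unfold ergCoeff
  have hsup := Finset.sup'_le (Finset.univ_nonempty.product Finset.univ_nonempty)
    (fun p : n × n => ∑ k, |Q p.1 k - Q p.2 k|) (fun p _ => h p.1 p.2)
  linarith

/-- For two row-stochastic matrices `P` and `P'`, the ergodicity coefficient of their
product satisfies `Λ₁(P P') ≤ Λ₁(P) · Λ₁(P')`. -/
theorem ergCoeff_mul_le {n : Type*} [Fintype n] [Nonempty n] (P P' : Matrix n n ℝ)
    (hP0 : ∀ i j, 0 ≤ P i j) (hP1 : ∀ i, ∑ j, P i j = 1)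
    (hP'0 : ∀ i j, 0 ≤ P' i j) (hP'1 : ∀ i, ∑ j, P' i j = 1) :
    ergCoeff (P * P') ≤ ergCoeff P * ergCoeff P' := by
  classical
  have hNE : ((Finset.univ ×ˢ Finset.univ : Finset (n × n))).Nonempty :=
    Finset.univ_nonempty.product Finset.univ_nonempty
  -- nonnegativity of ergCoeff P'
  obtain ⟨i0⟩ := (inferInstance : Nonempty n)
  have hΛ'0 : 0 ≤ ergCoeff P' := by
    unfold ergCoeff
    have h := Finset.le_sup' (f := fun p : n × n => ∑ k, |P' p.1 k - P' p.2 k|)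
      (b := (i0, i0)) (Finset.mem_product.mpr ⟨Finset.mem_univ _, Finset.mem_univ _⟩)
    have hz : ∑ k, |P' i0 k - P' i0 k| = 0 := by simp
    rw [hz] at h
    linarith
  have hM : ∀ k k' : n, ∑ l, |P' k l - P' k' l| ≤ 2 * ergCoeff P' := by
    intro k k'
    have h := Finset.le_sup' (f := fun p : n × n => ∑ l, |P' p.1 l - P' p.2 l|)
      (b := (k, k')) (Finset.mem_product.mpr ⟨Finset.mem_univ _, Finset.mem_univ _⟩)
    unfold ergCoeff; linarith [h]
  have main : ∀ i j : n, ∑ l, |(P * P') i l - (P * P') j l|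
      ≤ 2 * (ergCoeff P * ergCoeff P') := by
    intro i j
    set d : n → ℝ := fun k => P i k - P j k with hdd
    have hd : ∑ k, d k = 0 := by
      rw [hdd]; rw [Finset.sum_sub_distrib, hP1 i, hP1 j]; ring
    have hrw : ∀ l, (P * P') i l - (P * P') j l = ∑ k, d k * P' k l := by
      intro l
      rw [Matrix.mul_apply, Matrix.mul_apply, ← Finset.sum_sub_distrib]
      exact Finset.sum_congr rfl fun k _ => by rw [hdd]; ring
    have hkey := key_sum P' d hd (2 * ergCoeff P') (by linarith) hM
    have hdbound : (1/2) * ∑ k, |d k| ≤ ergCoeff P := by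
      have h := Finset.le_sup' (f := fun p : n × n => ∑ k, |P p.1 k - P p.2 k|)
        (b := (i, j)) (Finset.mem_product.mpr ⟨Finset.mem_univ _, Finset.mem_univ _⟩)
      unfold ergCoeff; simp only [hdd]; linarith [h]
    calc ∑ l, |(P * P') i l - (P * P') j l|
        = ∑ l, |∑ k, d k * P' k l| := by
          exact Finset.sum_congr rfl fun l _ => by rw [hrw l]
      _ ≤ ((1/2) * ∑ k, |d k|) * (2 * ergCoeff P') := hkey
      _ ≤ ergCoeff P * (2 * ergCoeff P') :=
          mul_le_mul_of_nonneg_right hdbound (by linarith)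
      _ = 2 * (ergCoeff P * ergCoeff P') := by ring
  calc ergCoeff (P * P') ≤ (1/2) * (2 * (ergCoeff P * ergCoeff P')) :=
        ergCoeff_le_of_forall _ _ main
    _ = ergCoeff P * ergCoeff P' := by ring
end

section
/- If μ and ν are stationary distributions of row-stochastic matrices P and P' respectively, then νᵀ − μᵀ = νᵀ (P' − P) Z#, where Z# = (I − P + 1μᵀ)⁻¹ − 1μᵀ is the group inverse of I − P (assuming the inverse exists). -/
open Matrix

/-- If `μ` and `ν` are stationary distributions of row-stochastic matrices `P` and `P'`
respectively, then `νᵀ − μᵀ = νᵀ (P' − P) Z#`, where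
`Z# = (I − P + 1·μᵀ)⁻¹ − 1·μᵀ` is the group inverse of `I − P` (assuming the inverse
exists). -/
theorem stationary_difference_identity {n : Type*} [Fintype n] [DecidableEq n]
    (P P' : Matrix n n ℝ) (μ ν : n → ℝ)
    (hP0 : ∀ i j, 0 ≤ P i j) (hP1 : ∀ i, ∑ j, P i j = 1)
    (hP'0 : ∀ i j, 0 ≤ P' i j) (hP'1 : ∀ i, ∑ j, P' i j = 1)
    (hμ0 : ∀ i, 0 ≤ μ i) (hμ1 : ∑ i, μ i = 1)
    (hν0 : ∀ i, 0 ≤ ν i) (hν1 : ∑ i, ν i = 1)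
    (hμstat : μ ᵥ* P = μ) (hνstat : ν ᵥ* P' = ν)
    (hA : IsUnit (1 - P + Matrix.of fun _ j => μ j).det) :
    ν - μ = ν ᵥ* ((P' - P) *
      ((1 - P + Matrix.of fun _ j => μ j)⁻¹ - Matrix.of fun _ j => μ j)) := by
  set J : Matrix n n ℝ := Matrix.of fun _ j => μ j with hJ
  set A : Matrix n n ℝ := 1 - P + J with hAdef
  -- (P' - P) * J = 0
  have hPJ : (P' - P) * J = 0 := by
    ext i j
    simp [Matrix.mul_apply, hJ, sub_mul, ← Finset.sum_mul, hP1, hP'1,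
      Finset.sum_sub_distrib]
  have hνJ : ν ᵥ* J = μ := by
    ext j
    simp [Matrix.vecMul, dotProduct, hJ, ← Finset.sum_mul, hν1]
  have hνA : ν ᵥ* A = ν - ν ᵥ* P + μ := by
    rw [hAdef, Matrix.vecMul_add, Matrix.vecMul_sub, Matrix.vecMul_one, hνJ]
  have hμJ : μ ᵥ* J = μ := by
    ext j
    simp [Matrix.vecMul, dotProduct, hJ, ← Finset.sum_mul, hμ1]
  have hμA : μ ᵥ* A = μ := by
    rw [hAdef, Matrix.vecMul_add, Matrix.vecMul_sub, Matrix.vecMul_one, hμstat, hμJ]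
    abel
  have key : (ν - μ) ᵥ* A = ν ᵥ* (P' - P) := by
    rw [Matrix.sub_vecMul, hνA, hμA, Matrix.vecMul_sub, hνstat]
    abel
  have hAinv : A * A⁻¹ = 1 := Matrix.mul_nonsing_inv A hA
  calc ν - μ = (ν - μ) ᵥ* (A * A⁻¹) := by rw [hAinv, Matrix.vecMul_one]
    _ = ((ν - μ) ᵥ* A) ᵥ* A⁻¹ := by rw [Matrix.vecMul_vecMul]
    _ = (ν ᵥ* (P' - P)) ᵥ* A⁻¹ := by rw [key]
    _ = ν ᵥ* ((P' - P) * A⁻¹) := by rw [Matrix.vecMul_vecMul]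
    _ = ν ᵥ* ((P' - P) * (A⁻¹ - J)) := by
        rw [Matrix.mul_sub, hPJ, sub_zero]
end

section
/- Local optimality bound for submodular maximization over a matroid: if S is a basis of a matroid N = (V, I), f : 2^V → ℝ is monotone, submodular, nonnegative, and there exists ε > 0 such that f(S) ≥ (1/(1+ε)) f((S ∪ {v}) \ {u}) for every u ∈ S and v ∉ S with (S ∪ {v}) \ {u} ∈ I, then f(S) ≥ (1/(2 + εk)) f(T) for every T ∈ I, where k is the rank of N. -/
/-- Extension lemma: any independent subset of `insert b S` can be grown (within
`insert b S`) to an independent set of cardinality `S.card`, provided `S` is independent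
and `insert b S` is not. -/
lemma lsmb_extend {V : Type*} [DecidableEq V] (I : Finset (Finset V))
    (hexch : ∀ S ∈ I, ∀ T ∈ I, S.card < T.card → ∃ v ∈ T \ S, insert v S ∈ I)
    (S : Finset V) (hS : S ∈ I) (b : V) (hb : b ∉ S) (hbS : insert b S ∉ I) :
    ∀ n : ℕ, ∀ J ∈ I, J ⊆ insert b S → S.card - J.card = n →
      ∃ J' ∈ I, J ⊆ J' ∧ J' ⊆ insert b S ∧ J'.card = S.card := by
  intro n
  induction n with
  | zero =>
      intro J hJ hJsub hcard
      refine ⟨J, hJ, subset_rfl, hJsub, ?_⟩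
      have hle : J.card ≤ S.card := by
        have h1 : J.card ≤ (insert b S).card := Finset.card_le_card hJsub
        have h2 : (insert b S).card = S.card + 1 := Finset.card_insert_of_notMem hb
        rcases Nat.lt_or_ge J.card (S.card + 1) with h | h
        · omega
        · exfalso
          have : J = insert b S := Finset.eq_of_subset_of_card_le hJsub (by omega)
          exact hbS (this ▸ hJ)
      omega
  | succ n ih =>
      intro J hJ hJsub hcard
      have hlt : J.card < S.card := by omega
      obtain ⟨v, hv, hvJ⟩ := hexch J hJ S hS hlt
      have hvS : v ∈ S := (Finset.mem_sdiff.mp hv).1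
      have hsub' : insert v J ⊆ insert b S :=
        Finset.insert_subset (Finset.mem_insert_of_mem hvS) hJsub
      have hcard' : S.card - (insert v J).card = n := by
        rw [Finset.card_insert_of_notMem (Finset.mem_sdiff.mp hv).2]; omega
      obtain ⟨J', hJ', hsubJ', hJ'sub, hJ'card⟩ := ih (insert v J) hvJ hsub' hcard'
      exact ⟨J', hJ', (Finset.subset_insert v J).trans hsubJ', hJ'sub, hJ'card⟩

/-- The fundamental-circuit lemma: for a basis `S` and `b ∉ S`, the set of elements
`a ∈ S` with `insert b (S.erase a) ∈ I`, together with `b`, is dependent. -/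
lemma lsmb_circuit {V : Type*} [DecidableEq V] (I : Finset (Finset V))
    (hdown : ∀ S T : Finset V, S ⊆ T → T ∈ I → S ∈ I)
    (hexch : ∀ S ∈ I, ∀ T ∈ I, S.card < T.card → ∃ v ∈ T \ S, insert v S ∈ I)
    (S : Finset V) (hS : S ∈ I) (b : V) (hb : b ∉ S) (hbS : insert b S ∉ I) :
    insert b (S.filter (fun a => insert b (S.erase a) ∈ I)) ∉ I := by
  intro hcon
  set C := S.filter (fun a => insert b (S.erase a) ∈ I) with hC
  have hCsub : C ⊆ S := Finset.filter_subset _ _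
  have hsub : insert b C ⊆ insert b S := Finset.insert_subset_insert _ hCsub
  obtain ⟨J', hJ', hsubJ', hJ'sub, hJ'card⟩ :=
    lsmb_extend I hexch S hS b hb hbS _ (insert b C) hcon hsub rfl
  have hbJ' : b ∈ J' := hsubJ' (Finset.mem_insert_self _ _)
  -- there is some a ∈ S \ J'
  have hne : (S \ J').Nonempty := by
    rw [Finset.sdiff_nonempty]
    intro hSsub
    have : insert b S ⊆ J' := Finset.insert_subset hbJ' hSsub
    have hcard2 : (insert b S).card ≤ J'.card := Finset.card_le_card this
    rw [Finset.card_insert_of_notMem hb, hJ'card] at hcard2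
    omega
  obtain ⟨a, ha⟩ := hne
  have haS : a ∈ S := (Finset.mem_sdiff.mp ha).1
  have haJ' : a ∉ J' := (Finset.mem_sdiff.mp ha).2
  -- J' ⊆ insert b (S.erase a)
  have hsub2 : J' ⊆ insert b (S.erase a) := by
    intro x hx
    rcases Finset.mem_insert.mp (hJ'sub hx) with h | h
    · exact Finset.mem_insert.mpr (Or.inl h)
    · refine Finset.mem_insert.mpr (Or.inr (Finset.mem_erase.mpr ⟨?_, h⟩))
      rintro rfl; exact haJ' hx
  -- cards: |insert b (S.erase a)| = S.card
  have hcard3 : (insert b (S.erase a)).card = S.card := by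
    rw [Finset.card_insert_of_notMem (fun hmem => hb (Finset.mem_of_mem_erase hmem)),
      Finset.card_erase_of_mem haS]
    have : 1 ≤ S.card := Finset.card_pos.mpr ⟨a, haS⟩
    omega
  have hEq : J' = insert b (S.erase a) :=
    Finset.eq_of_subset_of_card_le hsub2 (by rw [hcard3, hJ'card])
  have hmem : insert b (S.erase a) ∈ I := hEq ▸ hJ'
  have : a ∈ C := Finset.mem_filter.mpr ⟨haS, hmem⟩
  exact haJ' (hsubJ' (Finset.mem_insert_of_mem this))

/-- Telescoping: `f (S ∪ D) - f S ≤ ∑_{v ∈ D} (f (insert v S) - f S)` for submodular `f`. -/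
lemma lsmb_telescope {V : Type*} [DecidableEq V] (f : Finset V → ℝ)
    (hsub : ∀ S T : Finset V, S ⊆ T → ∀ v ∉ T,
      f (insert v T) - f T ≤ f (insert v S) - f S) :
    ∀ (D S : Finset V), f (S ∪ D) - f S ≤ ∑ v ∈ D, (f (insert v S) - f S) := by
  intro D
  induction D using Finset.induction_on with
  | empty => intro S; simp
  | @insert a D' ha ih =>
      intro S
      rw [Finset.sum_insert ha]
      have hU : S ∪ insert a D' = insert a (S ∪ D') := Finset.union_insert a S D'
      by_cases haS : a ∈ S
      · have h1 : insert a (S ∪ D') = S ∪ D' := Finset.insert_eq_self.mpr (Finset.mem_union_left _ haS)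
        have h2 : insert a S = S := Finset.insert_eq_self.mpr haS
        rw [hU, h1, h2]
        have := ih S
        linarith
      · by_cases haD : a ∈ S ∪ D'
        · exact absurd ((Finset.mem_union.mp haD).resolve_left haS) ha
        · have h3 : f (insert a (S ∪ D')) - f (S ∪ D') ≤ f (insert a S) - f S :=
            hsub S (S ∪ D') Finset.subset_union_left a haD
          have := ih S
          rw [hU]
          linarith

/-- Removal-sum bound: `∑_{u ∈ U} (f S - f (S.erase u)) ≤ f S - f (S \ U)` for `U ⊆ S`. -/
lemma lsmb_erase_sum {V : Type*} [DecidableEq V] (f : Finset V → ℝ)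
    (hsub : ∀ S T : Finset V, S ⊆ T → ∀ v ∉ T,
      f (insert v T) - f T ≤ f (insert v S) - f S) (S : Finset V) :
    ∀ U : Finset V, U ⊆ S → ∑ u ∈ U, (f S - f (S.erase u)) ≤ f S - f (S \ U) := by
  intro U
  induction U using Finset.induction_on with
  | empty => intro _; simp
  | @insert a U' ha ih =>
      intro hUS
      have haS : a ∈ S := hUS (Finset.mem_insert_self _ _)
      have hU'S : U' ⊆ S := (Finset.subset_insert a U').trans hUS
      rw [Finset.sum_insert ha]
      have ih' := ih hU'S
      -- key: f S - f (S.erase a) ≤ f (S \ U') - f (S \ insert a U')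
      have hkey : f S - f (S.erase a) ≤ f (S \ U') - f (S \ insert a U') := by
        have hA : S \ insert a U' = (S \ U').erase a := Finset.sdiff_insert S U' a
        have hAB : S \ insert a U' ⊆ S.erase a := by
          rw [hA]
          exact Finset.erase_subset_erase a (Finset.sdiff_subset)
        have hanotin : a ∉ S.erase a := Finset.notMem_erase a S
        have h1 : f (insert a (S.erase a)) - f (S.erase a)
            ≤ f (insert a (S \ insert a U')) - f (S \ insert a U') :=
          hsub _ _ hAB a hanotin
        have h2 : insert a (S.erase a) = S := Finset.insert_erase haS
        have h3 : insert a (S \ insert a U') = S \ U' := by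
          rw [hA]
          exact Finset.insert_erase (Finset.mem_sdiff.mpr ⟨haS, ha⟩)
        rw [h2, h3] at h1
        linarith
      linarith

/-- Local optimality bound for monotone submodular maximization over a matroid:
if `S` is a basis of a matroid `(V, I)`, `f` is monotone, submodular and nonnegative, and
there is `ε > 0` such that `f(S) ≥ (1/(1+ε)) f((S ∪ {v}) \ {u})` for every `u ∈ S` and
`v ∉ S` with `(S ∪ {v}) \ {u} ∈ I`, then `f(S) ≥ (1/(2 + εk)) f(T)` for every `T ∈ I`,
where `k` is the rank of the matroid. -/
theorem local_search_matroid_bound {V : Type*} [DecidableEq V] [Fintype V]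
    (I : Finset (Finset V))
    (hempty : ∅ ∈ I)
    (hdown : ∀ S T : Finset V, S ⊆ T → T ∈ I → S ∈ I)
    (hexch : ∀ S ∈ I, ∀ T ∈ I, S.card < T.card → ∃ v ∈ T \ S, insert v S ∈ I)
    (f : Finset V → ℝ)
    (hmono : ∀ S T : Finset V, S ⊆ T → f S ≤ f T)
    (hsub : ∀ S T : Finset V, S ⊆ T → ∀ v ∉ T,
      f (insert v T) - f T ≤ f (insert v S) - f S)
    (hnonneg : ∀ S, 0 ≤ f S)
    (S : Finset V) (hS : S ∈ I) (hSbasis : ∀ v ∉ S, insert v S ∉ I)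
    (k : ℕ) (hk : IsGreatest {c : ℕ | ∃ T ∈ I, T.card = c} k)
    (ε : ℝ) (hε : 0 < ε)
    (hloc : ∀ u ∈ S, ∀ v ∉ S, insert v (S.erase u) ∈ I →
      (1 / (1 + ε)) * f (insert v (S.erase u)) ≤ f S) :
    ∀ T ∈ I, (1 / (2 + ε * k)) * f T ≤ f S := by
  intro T hT
  classical
  set A : Finset V := T \ S with hA
  -- Hall's theorem: an injective choice of exchange partners
  obtain ⟨π, hπinj, hπmem⟩ :
      ∃ π : {x // x ∈ A} → V, Function.Injective π ∧
        ∀ x : {x // x ∈ A}, π x ∈ S.filter (fun a => insert x.1 (S.erase a) ∈ I) := by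
    apply (Finset.all_card_le_biUnion_card_iff_exists_injective
      (fun x : {x // x ∈ A} => S.filter (fun a => insert x.1 (S.erase a) ∈ I))).mp
    intro s
    by_contra hcon
    push_neg at hcon
    set N : Finset V := s.biUnion (fun x => S.filter (fun a => insert x.1 (S.erase a) ∈ I))
      with hN
    have hNS : N ⊆ S := by
      intro x hx
      obtain ⟨y, _, hy⟩ := Finset.mem_biUnion.mp hx
      exact (Finset.mem_filter.mp hy).1
    have hNI : N ∈ I := hdown N S hNS hS
    set X : Finset V := s.image (fun x => x.1) with hX
    have hXcard : X.card = s.card := Finset.card_image_of_injective _ Subtype.val_injective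
    have hXA : X ⊆ A := by
      intro x hx
      obtain ⟨y, _, rfl⟩ := Finset.mem_image.mp hx
      exact y.2
    have hXI : X ∈ I := hdown X T (hXA.trans Finset.sdiff_subset) hT
    have hlt : N.card < X.card := by omega
    obtain ⟨v, hv, hvN⟩ := hexch N hNI X hXI hlt
    have hvX : v ∈ X := (Finset.mem_sdiff.mp hv).1
    obtain ⟨y, hys, hyv⟩ := Finset.mem_image.mp hvX
    have hvS : v ∉ S := (Finset.mem_sdiff.mp (hXA hvX)).2
    have hvbS : insert v S ∉ I := hSbasis v hvS
    -- the fundamental circuit of v sits inside insert v N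
    have hCsub : insert v (S.filter (fun a => insert v (S.erase a) ∈ I)) ⊆ insert v N := by
      apply Finset.insert_subset_insert
      intro a ha
      refine Finset.mem_biUnion.mpr ⟨y, hys, ?_⟩
      rw [hyv]
      exact ha
    have := lsmb_circuit I hdown hexch S hS v hvS hvbS
    exact this (hdown _ _ hCsub hvN)
  -- properties of π
  have hπS : ∀ x : {x // x ∈ A}, π x ∈ S := fun x => (Finset.mem_filter.mp (hπmem x)).1
  have hπI : ∀ x : {x // x ∈ A}, insert x.1 (S.erase (π x)) ∈ I :=
    fun x => (Finset.mem_filter.mp (hπmem x)).2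
  -- bound each marginal
  have hε1 : (0:ℝ) < 1 + ε := by linarith
  have hbound : ∀ x : {x // x ∈ A},
      f (insert x.1 S) - f S ≤ ε * f S + (f S - f (S.erase (π x))) := by
    intro x
    have hxS : x.1 ∉ S := (Finset.mem_sdiff.mp x.2).2
    have h1 : f (insert x.1 S) - f S ≤ f (insert x.1 (S.erase (π x))) - f (S.erase (π x)) :=
      hsub (S.erase (π x)) S (Finset.erase_subset _ _) x.1 hxS
    have h2 := hloc (π x) (hπS x) x.1 hxS (hπI x)
    rw [one_div, inv_mul_le_iff₀ hε1] at h2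
    linarith
  -- sum of marginals
  have hsum1 : f (S ∪ A) - f S ≤ ∑ v ∈ A, (f (insert v S) - f S) :=
    lsmb_telescope f hsub A S
  have hsum2 : ∑ v ∈ A, (f (insert v S) - f S)
      = ∑ x ∈ A.attach, (f (insert x.1 S) - f S) := (Finset.sum_attach A _).symm
  have hsum3 : ∑ x ∈ A.attach, (f (insert x.1 S) - f S)
      ≤ ∑ x ∈ A.attach, (ε * f S + (f S - f (S.erase (π x)))) :=
    Finset.sum_le_sum (fun x _ => hbound x)
  -- the erase part via the image of π
  set U : Finset V := A.attach.image π with hU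
  have hUS : U ⊆ S := by
    intro u hu
    obtain ⟨x, _, rfl⟩ := Finset.mem_image.mp hu
    exact hπS x
  have hsum4 : ∑ x ∈ A.attach, (f S - f (S.erase (π x)))
      = ∑ u ∈ U, (f S - f (S.erase u)) := by
    rw [hU, Finset.sum_image (fun x _ y _ h => hπinj h)]
  have hsum5 : ∑ u ∈ U, (f S - f (S.erase u)) ≤ f S - f (S \ U) :=
    lsmb_erase_sum f hsub S U hUS
  have hsum6 : f S - f (S \ U) ≤ f S := by
    have := hnonneg (S \ U); linarith
  -- card bound
  have hAk : (A.card : ℝ) ≤ (k : ℝ) := by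
    have h1 : A.card ≤ T.card := Finset.card_le_card Finset.sdiff_subset
    have h2 : T.card ≤ k := hk.2 ⟨T, hT, rfl⟩
    exact_mod_cast le_trans h1 h2
  -- combine
  have hfS : 0 ≤ f S := hnonneg S
  have hsplit : ∑ x ∈ A.attach, (ε * f S + (f S - f (S.erase (π x))))
      = A.card * (ε * f S) + ∑ x ∈ A.attach, (f S - f (S.erase (π x))) := by
    rw [Finset.sum_add_distrib, Finset.sum_const, Finset.card_attach, nsmul_eq_mul]
  have hcardterm : (A.card : ℝ) * (ε * f S) ≤ (k : ℝ) * (ε * f S) := by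
    apply mul_le_mul_of_nonneg_right hAk (by positivity)
  have hmain : f (S ∪ A) ≤ (2 + ε * k) * f S := by
    have := hsum1
    rw [hsum2] at this
    have h := le_trans this (le_trans hsum3 (le_of_eq hsplit))
    -- h : f (S ∪ A) - f S ≤ A.card * (ε * f S) + (f S)  -- roughly
    nlinarith [hsum4, hsum5, hsum6, hcardterm]
  have hTsub : T ⊆ S ∪ A := by
    intro x hx
    by_cases hxS : x ∈ S
    · exact Finset.mem_union_left _ hxS
    · exact Finset.mem_union_right _ (Finset.mem_sdiff.mpr ⟨hx, hxS⟩)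
  have hfT : f T ≤ (2 + ε * k) * f S := le_trans (hmono T (S ∪ A) hTsub) hmain
  have hpos : (0:ℝ) < 2 + ε * k := by positivity
  rw [one_div, inv_mul_le_iff₀ hpos]
  exact hfT
end
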